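/- arXiv:1811.07784 — 3 statements merged into one kernel-verified Lean document; each statement's English description precedes it below -/
import Mathlib

section
/- Let m ≥ 2, u₀ ≥ m, θ ≥ 1, t₁ ≥ 1 and ω ≥ -1 be integers, let N₁, ..., N_m and D₁, ..., D_m be positive integers, set Λ = θ·(2t₁u₀)^{u₀}·(1 + max_{1≤i≤m} N_i)·∏_{i=1}^m D_i and ψ(u) = ∏_{j=u+1}^{u₀} (ω'j + 1) with ω' = ω + 3. Let 0 ≤ u ≤ u₀ be an integer, let u₁, ..., u_m ≥ 0 be integers with u₁ + ... + u_m = u, and let d₁, ..., d_m be positive integers with d_i ≤ D_i·Λ^{ψ(u)-1} for all i. Then ∑_{i=1}^m d_i(u_i+1)·log(2d_i(N_i+1)) < (1/2)·Λ^{2ψ(u)}. -/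
/-!
Since `log x ≤ x`, each summand is at most `d_i (u_i + 1) · 2 d_i (N_i + 1)`, and with
`d_i ≤ (∏ D) Λ^{ψ(u)-1}`, `u_i ≤ u₀`, `N_i + 1 ≤ 1 + max N` the whole sum is at most
`½ · 4 m (u₀ + 1) (1 + max N) (∏ D)² · Λ^{2ψ(u)-2}`. The constant in front of `Λ^{2ψ(u)-2}` is
smaller than `Λ²`, because `4 m (u₀ + 1) ≤ 4 u₀ (u₀ + 1) < (2 t₁ u₀)^{2u₀}` once `u₀ ≥ 2`.
-/

open Finset Real

lemma mul_mul_log_le {d a x X A Y : ℝ} (hd : 0 ≤ d) (ha : 0 ≤ a) (hx : 0 ≤ x)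
    (hdX : d ≤ X) (haA : a ≤ A) (hxY : x ≤ Y) : d * a * log x ≤ X * A * Y :=
  calc d * a * log x ≤ d * a * x := mul_le_mul_of_nonneg_left (log_le_self hx) (by positivity)
    _ ≤ X * A * Y := by have := hd.trans hdX; have := ha.trans haA; gcongr

lemma four_mul_mul_add_one_lt_pow {n t : ℕ} (hn : 2 ≤ n) (ht : 1 ≤ t) :
    4 * n * (n + 1) < (2 * t * n) ^ (2 * n) :=
  calc 4 * n * (n + 1) < (2 * n) ^ 4 := by nlinarith [Nat.mul_le_mul hn hn]
    _ ≤ (2 * n) ^ (2 * n) := Nat.pow_le_pow_right (by omega) (by omega)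
    _ ≤ (2 * t * n) ^ (2 * n) := Nat.pow_le_pow_left (by nlinarith) _

lemma four_mul_mul_mul_sq_lt_sq {m n θ t B C : ℕ} (hmn : m ≤ n) (hn : 2 ≤ n) (hθ : 1 ≤ θ)
    (ht : 1 ≤ t) (hB : 1 ≤ B) (hC : 1 ≤ C) :
    4 * m * (n + 1) * B * C ^ 2 < (θ * (2 * t * n) ^ n * B * C) ^ 2 :=
  calc 4 * m * (n + 1) * B * C ^ 2 ≤ 4 * n * (n + 1) * (B * C) ^ 2 := by
        rw [mul_pow, ← mul_assoc]; gcongr; nlinarith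
    _ < (2 * t * n) ^ (2 * n) * (B * C) ^ 2 :=
        Nat.mul_lt_mul_of_pos_right (four_mul_mul_add_one_lt_pow hn ht) (by positivity)
    _ ≤ θ ^ 2 * ((2 * t * n) ^ (2 * n) * (B * C) ^ 2) := Nat.le_mul_of_pos_left _ (by positivity)
    _ = (θ * (2 * t * n) ^ n * B * C) ^ 2 := by ring

lemma mul_add_one_mul_log_le {ι : Type*} [Fintype ι] {N D v d : ι → ℕ} {n : ℕ} {P : ℝ}
    (hD : ∀ i, 1 ≤ D i) (hv : ∑ i, v i ≤ n) (hd : ∀ i, (d i : ℝ) ≤ D i * P) (i : ι) :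
    (d i : ℝ) * ((v i : ℝ) + 1) * log (2 * (d i : ℝ) * ((N i : ℝ) + 1)) ≤
      ((∏ j, D j : ℕ) * P) * ((n : ℝ) + 1) *
        (2 * ((∏ j, D j : ℕ) * P) * (1 + univ.sup N : ℕ)) := by
  have hDi : D i ≤ ∏ j, D j := single_le_prod' (fun j _ ↦ hD j) (mem_univ i)
  have hvi : v i ≤ n := (single_le_sum (fun j _ ↦ (v j).zero_le) (mem_univ i)).trans hv
  have hNi : N i + 1 ≤ 1 + univ.sup N := by have := le_sup (f := N) (mem_univ i); omega
  have hP : 0 ≤ P := nonneg_of_mul_nonneg_right ((d i).cast_nonneg.trans (hd i))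
    (by exact_mod_cast hD i)
  have hdi : (d i : ℝ) ≤ (∏ j, D j : ℕ) * P := (hd i).trans (by gcongr)
  refine mul_mul_log_le (by positivity) (by positivity) (by positivity) hdi ?_ ?_
  · exact_mod_cast Nat.succ_le_succ hvi
  · gcongr; exact_mod_cast hNi

theorem stmt_9_general (m u₀ θ t₁ : ℕ) (hm : 2 ≤ m) (hu₀ : m ≤ u₀) (hθ : 1 ≤ θ) (ht₁ : 1 ≤ t₁)
    (ω : ℤ) (hω : -1 ≤ ω) (N D : Fin m → ℕ) (hD : ∀ i, 1 ≤ D i)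
    (Λ : ℕ) (hΛ : Λ = θ * (2 * t₁ * u₀) ^ u₀ * (1 + Finset.univ.sup N) * ∏ i, D i)
    (ψ : ℕ → ℤ) (hψ : ∀ u, ψ u = ∏ j ∈ Finset.Icc (u + 1) u₀, ((ω + 3) * (j : ℤ) + 1))
    (u : ℕ) (hu : u ≤ u₀) (uvec : Fin m → ℕ) (huvec : ∑ i, uvec i = u)
    (d : Fin m → ℕ)
    (hd2 : ∀ i, (d i : ℝ) ≤ (D i : ℝ) * (Λ : ℝ) ^ (ψ u - 1)) :
    ∑ i, (d i : ℝ) * ((uvec i : ℝ) + 1) * Real.log (2 * (d i : ℝ) * ((N i : ℝ) + 1)) <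
      1 / 2 * (Λ : ℝ) ^ (2 * ψ u) := by
  set B := 1 + univ.sup N
  set C := ∏ i, D i
  have hkey : 4 * m * (u₀ + 1) * B * C ^ 2 < Λ ^ 2 := hΛ ▸
    four_mul_mul_mul_sq_lt_sq hu₀ (hm.trans hu₀) hθ ht₁ (by omega) (one_le_prod' fun i _ ↦ hD i)
  have hψ1 : 1 ≤ ψ u := hψ u ▸ one_le_prod fun j _ ↦ by nlinarith [(j.cast_nonneg : (0 : ℤ) ≤ j)]
  obtain ⟨k, hk⟩ := Int.eq_ofNat_of_zero_le (sub_nonneg.mpr hψ1)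
  have hΛk : (Λ : ℝ) ^ (2 * ψ u) = (Λ : ℝ) ^ 2 * ((Λ : ℝ) ^ k) ^ 2 := by
    rw [show 2 * ψ u = ((2 + k * 2 : ℕ) : ℤ) by omega, zpow_natCast, pow_add, pow_mul]
  have hdΛ : ∀ i, (d i : ℝ) ≤ D i * (Λ : ℝ) ^ k := fun i ↦ by simpa [hk] using hd2 i
  have hΛk_pos : (0 : ℝ) < (Λ : ℝ) ^ k := by
    have : 0 < Λ := Nat.pos_of_ne_zero fun h ↦ by simp [h] at hkey
    positivity
  calc _ ≤ ∑ _i : Fin m, (C * Λ ^ k) * ((u₀ : ℝ) + 1) * (2 * (C * Λ ^ k) * B) :=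
        sum_le_sum fun i _ ↦ mul_add_one_mul_log_le hD (huvec.trans_le hu) hdΛ i
    _ = 1 / 2 * ((4 * m * (u₀ + 1) * B * C ^ 2 : ℕ) : ℝ) * ((Λ : ℝ) ^ k) ^ 2 := by
        simp only [sum_const, card_univ, Fintype.card_fin, nsmul_eq_mul]; push_cast; ring
    _ < 1 / 2 * (Λ : ℝ) ^ (2 * ψ u) := by
        rw [hΛk, ← mul_assoc]; gcongr; exact_mod_cast hkey

/-- Let `m ≥ 2`, `u₀ ≥ m`, `θ ≥ 1`, `t₁ ≥ 1` and `ω ≥ -1` be integers, let `N₁, ..., N_m`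
and `D₁, ..., D_m` be positive integers, set `Λ = θ·(2t₁u₀)^{u₀}·(1 + max_i N_i)·∏_i D_i`
and `ψ(u) = ∏_{j=u+1}^{u₀} (ω'j + 1)` with `ω' = ω + 3`. Let `0 ≤ u ≤ u₀` be an integer,
let `u₁, ..., u_m ≥ 0` be integers with `u₁ + ... + u_m = u`, and let `d₁, ..., d_m` be
positive integers with `d_i ≤ D_i·Λ^{ψ(u)-1}` for all `i`. Then
`∑_i d_i(u_i+1)·log(2d_i(N_i+1)) < (1/2)·Λ^{2ψ(u)}`. -/
theorem stmt_9 (m u₀ θ t₁ : ℕ) (hm : 2 ≤ m) (hu₀ : m ≤ u₀) (hθ : 1 ≤ θ) (ht₁ : 1 ≤ t₁)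
    (ω : ℤ) (hω : -1 ≤ ω) (N D : Fin m → ℕ) (hN : ∀ i, 1 ≤ N i) (hD : ∀ i, 1 ≤ D i)
    (Λ : ℕ) (hΛ : Λ = θ * (2 * t₁ * u₀) ^ u₀ * (1 + Finset.univ.sup N) * ∏ i, D i)
    (ψ : ℕ → ℤ) (hψ : ∀ u, ψ u = ∏ j ∈ Finset.Icc (u + 1) u₀, ((ω + 3) * (j : ℤ) + 1))
    (u : ℕ) (hu : u ≤ u₀) (uvec : Fin m → ℕ) (huvec : ∑ i, uvec i = u)
    (d : Fin m → ℕ) (hd1 : ∀ i, 1 ≤ d i)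
    (hd2 : ∀ i, (d i : ℝ) ≤ (D i : ℝ) * (Λ : ℝ) ^ (ψ u - 1)) :
    ∑ i, (d i : ℝ) * ((uvec i : ℝ) + 1) * Real.log (2 * (d i : ℝ) * ((N i : ℝ) + 1)) <
      1 / 2 * (Λ : ℝ) ^ (2 * ψ u) :=
  stmt_9_general m u₀ θ t₁ hm hu₀ hθ ht₁ ω hω N D hD Λ hΛ ψ hψ u hu uvec huvec d hd2
end

section
/- Let m ≥ 2, u₀ ≥ m, θ ≥ 1, t₁ ≥ 1 and ω ≥ -1 be integers, let N₁, ..., N_m and D₁, ..., D_m be positive integers, set ω' = ω + 3, Λ = θ·(2t₁u₀)^{u₀}·(1 + max_{1≤i≤m} N_i)·∏_{i=1}^m D_i and ψ(u) = ∏_{j=u+1}^{u₀} (ω'j + 1). Let 1 ≤ u ≤ u₀ be an integer and let d₁, ..., d_m be positive integers with ∏_{i=1}^m d_i ≤ (∏_{i=1}^m D_i)·Λ^{ψ(u)-1}. Then 8·u·θ·(t₁m)^u·∏_{i=1}^m d_i^{1+ω} ≤ Λ^{ω'·u·ψ(u)}. -/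
/-!
With `X = (2t₁u₀)^{u₀}`, both `8u` and `(t₁m)^u` are at most `X`, while `θX ≤ Λ`; hence
`8uθ(t₁m)^u ≤ Λ²`. The hypothesis on the `d_i` gives `∏ d_i ≤ Λ^{ψ(u)}`, so the left-hand side is
at most `Λ^{2 + (1+ω)ψ(u)}`, and `2 + (1+ω)ψ(u) ≤ (ω+3)uψ(u)` because `ψ(u) ≥ 1` and `u ≥ 1`.
-/

lemma one_le_prod_mul_add_one {c : ℤ} (hc : 0 ≤ c) (s : Finset ℕ) :
    1 ≤ ∏ j ∈ s, (c * (j : ℤ) + 1) :=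
  Finset.one_le_prod fun j _ => by have := mul_nonneg hc j.cast_nonneg; omega

lemma eight_mul_le_pow {t u u₀ : ℕ} (ht : 0 < t) (hu₀ : 2 ≤ u₀) (hu : u ≤ u₀) :
    8 * u ≤ (2 * t * u₀) ^ u₀ :=
  calc 8 * u ≤ (2 * 1 * u₀) ^ 2 := by nlinarith
    _ ≤ (2 * t * u₀) ^ 2 := by gcongr; omega
    _ ≤ (2 * t * u₀) ^ u₀ := Nat.pow_le_pow_right (by positivity) hu₀

lemma mul_pow_le_pow {t m u u₀ : ℕ} (hm : m ≤ u₀) (hu : u ≤ u₀) (hpos : 0 < 2 * t * u₀) :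
    (t * m) ^ u ≤ (2 * t * u₀) ^ u₀ :=
  calc (t * m) ^ u ≤ (2 * t * u₀) ^ u := Nat.pow_le_pow_left (by nlinarith) u
    _ ≤ (2 * t * u₀) ^ u₀ := Nat.pow_le_pow_right hpos hu

lemma eight_mul_mul_pow_le {θ t m u u₀ : ℕ} (ht : 0 < t) (hm : m ≤ u₀) (hu₀ : 2 ≤ u₀)
    (hu : u ≤ u₀) :
    8 * u * θ * (t * m) ^ u ≤ θ * (2 * t * u₀) ^ u₀ * (2 * t * u₀) ^ u₀ :=
  calc 8 * u * θ * (t * m) ^ u = θ * (t * m) ^ u * (8 * u) := by ring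
    _ ≤ θ * (2 * t * u₀) ^ u₀ * (2 * t * u₀) ^ u₀ :=
      Nat.mul_le_mul (Nat.mul_le_mul_left θ (mul_pow_le_pow hm hu (by positivity)))
        (eight_mul_le_pow ht hu₀ hu)

lemma two_add_mul_one_add_le {ω u ψ : ℤ} (hω : -1 ≤ ω) (hu : 1 ≤ u) (hψ : 1 ≤ ψ) :
    2 + ψ * (1 + ω) ≤ (ω + 3) * u * ψ := by
  nlinarith [mul_nonneg (by omega : (0 : ℤ) ≤ ω + 3) (by omega : (0 : ℤ) ≤ u - 1)]

lemma mul_zpow_le_zpow {L a P : ℝ} {p q e E : ℤ} (hL : 1 ≤ L) (ha : a ≤ L ^ p)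
    (hP₀ : 0 ≤ P) (hP : P ≤ L ^ q) (he : 0 ≤ e) (hE : p + q * e ≤ E) :
    a * P ^ e ≤ L ^ E :=
  calc a * P ^ e ≤ L ^ p * (L ^ q) ^ e :=
        mul_le_mul ha (zpow_le_zpow_left₀ he hP₀ hP) (zpow_nonneg hP₀ e) (by positivity)
    _ = L ^ (p + q * e) := by rw [← zpow_mul, zpow_add₀ (by positivity)]
    _ ≤ L ^ E := zpow_le_zpow_right₀ hL hE

theorem stmt_12_general (m u₀ θ t₁ : ℕ) (hm : 2 ≤ m) (hu₀ : m ≤ u₀) (hθ : 1 ≤ θ) (ht₁ : 1 ≤ t₁)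
    (ω : ℤ) (hω : -1 ≤ ω) (N D : Fin m → ℕ) (hD : ∀ i, 1 ≤ D i)
    (Λ : ℕ) (hΛ : Λ = θ * (2 * t₁ * u₀) ^ u₀ * (1 + Finset.univ.sup N) * ∏ i, D i)
    (ψ : ℕ → ℤ) (hψ : ∀ u, ψ u = ∏ j ∈ Finset.Icc (u + 1) u₀, ((ω + 3) * (j : ℤ) + 1))
    (u : ℕ) (hu1 : 1 ≤ u) (hu2 : u ≤ u₀)
    (d : Fin m → ℕ)
    (hd2 : (∏ i, (d i : ℝ)) ≤ (∏ i, (D i : ℝ)) * (Λ : ℝ) ^ (ψ u - 1)) :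
    8 * (u : ℝ) * (θ : ℝ) * ((t₁ : ℝ) * (m : ℝ)) ^ u * ∏ i, (d i : ℝ) ^ (1 + ω) ≤
      (Λ : ℝ) ^ ((ω + 3) * (u : ℤ) * ψ u) := by
  have hbase : 0 < 2 * t₁ * u₀ := Nat.mul_pos (Nat.mul_pos two_pos ht₁) (by omega)
  have hθX : θ * (2 * t₁ * u₀) ^ u₀ ≤ Λ := hΛ ▸ (Nat.le_mul_of_pos_right _ (by omega)).trans
    (Nat.le_mul_of_pos_right _ (Finset.prod_pos fun i _ => hD i))
  have hX : (2 * t₁ * u₀) ^ u₀ ≤ Λ := (Nat.le_mul_of_pos_left _ hθ).trans hθX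
  have hDΛ : ∏ i, D i ≤ Λ :=
    hΛ ▸ Nat.le_mul_of_pos_left _ (Nat.mul_pos (Nat.mul_pos hθ (Nat.pow_pos hbase)) (by omega))
  have hΛ₁ : (1 : ℝ) ≤ Λ := by exact_mod_cast (Nat.pow_pos hbase).trans_le hX
  have hψ₁ : 1 ≤ ψ u := hψ u ▸ one_le_prod_mul_add_one (by omega) _
  have hlead : 8 * (u : ℝ) * θ * (t₁ * m) ^ u ≤ (Λ : ℝ) ^ (2 : ℤ) := by
    have h := (eight_mul_mul_pow_le ht₁ hu₀ (hm.trans hu₀) hu2).trans (Nat.mul_le_mul hθX hX)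
    rw [← sq] at h
    exact_mod_cast h
  have hprod : ∏ i, (d i : ℝ) ≤ (Λ : ℝ) ^ ψ u :=
    calc ∏ i, (d i : ℝ) ≤ (∏ i, (D i : ℝ)) * (Λ : ℝ) ^ (ψ u - 1) := hd2
      _ ≤ Λ * (Λ : ℝ) ^ (ψ u - 1) := by gcongr; exact_mod_cast hDΛ
      _ = (Λ : ℝ) ^ ψ u := by rw [← zpow_one_add₀ (by positivity)]; ring_nf
  rw [Finset.prod_zpow]
  exact mul_zpow_le_zpow hΛ₁ hlead (by positivity) hprod (by omega)
    (two_add_mul_one_add_le hω (by exact_mod_cast hu1) hψ₁)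

/-- Let `m ≥ 2`, `u₀ ≥ m`, `θ ≥ 1`, `t₁ ≥ 1` and `ω ≥ -1` be integers, let `N₁, ..., N_m`
and `D₁, ..., D_m` be positive integers, set `ω' = ω + 3`,
`Λ = θ·(2t₁u₀)^{u₀}·(1 + max_i N_i)·∏_i D_i` and `ψ(u) = ∏_{j=u+1}^{u₀} (ω'j + 1)`.
Let `1 ≤ u ≤ u₀` be an integer and let `d₁, ..., d_m` be positive integers with
`∏_i d_i ≤ (∏_i D_i)·Λ^{ψ(u)-1}`. Then `8·u·θ·(t₁m)^u·∏_i d_i^{1+ω} ≤ Λ^{ω'·u·ψ(u)}`. -/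
theorem stmt_12 (m u₀ θ t₁ : ℕ) (hm : 2 ≤ m) (hu₀ : m ≤ u₀) (hθ : 1 ≤ θ) (ht₁ : 1 ≤ t₁)
    (ω : ℤ) (hω : -1 ≤ ω) (N D : Fin m → ℕ) (hN : ∀ i, 1 ≤ N i) (hD : ∀ i, 1 ≤ D i)
    (Λ : ℕ) (hΛ : Λ = θ * (2 * t₁ * u₀) ^ u₀ * (1 + Finset.univ.sup N) * ∏ i, D i)
    (ψ : ℕ → ℤ) (hψ : ∀ u, ψ u = ∏ j ∈ Finset.Icc (u + 1) u₀, ((ω + 3) * (j : ℤ) + 1))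
    (u : ℕ) (hu1 : 1 ≤ u) (hu2 : u ≤ u₀)
    (d : Fin m → ℕ) (hd1 : ∀ i, 1 ≤ d i)
    (hd2 : (∏ i, (d i : ℝ)) ≤ (∏ i, (D i : ℝ)) * (Λ : ℝ) ^ (ψ u - 1)) :
    8 * (u : ℝ) * (θ : ℝ) * ((t₁ : ℝ) * (m : ℝ)) ^ u * ∏ i, (d i : ℝ) ^ (1 + ω) ≤
      (Λ : ℝ) ^ ((ω + 3) * (u : ℤ) * ψ u) :=
  stmt_12_general m u₀ θ t₁ hm hu₀ hθ ht₁ ω hω N D hD Λ hΛ ψ hψ u hu1 hu2 d hd2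
end

section
/- Let K be a number field, let u ≥ 0, N ≥ 0, D ≥ 1 and B ≥ 1 be integers, let U ∈ K[T₀, ..., T_u] be a nonzero homogeneous polynomial of degree D, and let (M_{jk}) (0 ≤ j ≤ u, 0 ≤ k ≤ N) be integers with |M_{jk}| ≤ B for all j, k. Let U' ∈ K[W₀, ..., W_N] be the polynomial obtained from U by substituting T_j = ∑_{k=0}^{N} M_{jk}·W_k for each j. If U' ≠ 0, then h(U') ≤ h(U) + D·log((N+1)·B) + log C(D+u, D), where h of a nonzero polynomial denotes the absolute logarithmic Weil height of its tuple of coefficients viewed as a point in projective space over K, the height being defined with the maximum norm at the archimedean places. -/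
open NumberField IsDedekindDomain

/-- The normalized `v`-adic absolute value on a number field `K`, for `v` a finite place
(nonzero prime ideal of the ring of integers): `|x|_v = N(v)^{-v(x)}`, so that the product
formula holds together with the infinite places. -/
noncomputable def vadicAbs {K : Type*} [Field K] [NumberField K]
    (v : HeightOneSpectrum (𝓞 K)) (x : K) : ℝ :=
  (WithZeroMulInt.toNNReal
    (by
      simp only [ne_eq, Nat.cast_eq_zero, Ideal.absNorm_eq_zero_iff]
      exact v.ne_bot : ((Ideal.absNorm v.asIdeal : NNReal)) ≠ 0)
    (v.valuation K x) : ℝ)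

/-- The absolute logarithmic Weil height of the tuple of coefficients of a nonzero
multivariate polynomial over a number field `K`, viewed as a point in projective space:
`h(P) = (1/[K:ℚ]) · (∑_{w infinite} mult(w)·log max_μ |P_μ|_w + ∑_{v finite} log max_μ |P_μ|_v)`,
using the maximum norm at the archimedean places (Bombieri–Gubler, Definition 1.5.4). -/
noncomputable def polyHeight {K : Type*} [Field K] [NumberField K] {σ : Type*}
    (P : MvPolynomial σ K) (hP : P ≠ 0) : ℝ :=
  have hs : P.support.Nonempty :=
    Finset.nonempty_iff_ne_empty.mpr (fun h => hP (MvPolynomial.support_eq_empty.mp h))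
  ((∑ w : InfinitePlace K,
      (w.mult : ℝ) * Real.log (P.support.sup' hs fun μ => w (MvPolynomial.coeff μ P)))
    + ∑ᶠ v : HeightOneSpectrum (𝓞 K),
        Real.log (P.support.sup' hs fun μ => vadicAbs v (MvPolynomial.coeff μ P)))
    / (Module.finrank ℚ K)

/-! The coefficient vector of `U'` is the image of that of `U` under the integer matrix
`c_{ν,d}` = the `W^ν`-coefficient of `∏_j L_j^{d_j}`, where `L_j = ∑_k M_{jk} W_k`, with one column
per monomial of `U`, hence at most `C(D+u, D)` columns. Its entries are majorized by the
coefficients of `∏_j (∑_k |M_{jk}| W_k)^{d_j}`, whose sum is at most `((N+1)B)^D`; as integers have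
absolute value at most `1` at the finite places, the matrix has height at most `D log((N+1)B)`, and
the height bound for linear maps, which costs the logarithm of the number of columns, concludes. -/

open Height AdmissibleAbsValues MvPolynomial

lemma Finset.sup'_eq_ciSup_coe {α ι : Type*} [ConditionallyCompleteLattice α] (s : Finset ι)
    (hs : s.Nonempty) (f : ι → α) : s.sup' hs f = ⨆ i : s, f i := by
  rw [Finset.sup'_eq_csSup_image, Set.image_eq_range, iSup]
  rfl

lemma AbsoluteValue.apply_natCast_le {R : Type*} [Semiring R] [Nontrivial R]
    (v : AbsoluteValue R ℝ) (n : ℕ) : v n ≤ n := by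
  induction n with
  | zero => simp
  | succ n ih =>
    push_cast
    exact (v.add_le _ _).trans (by rw [v.map_one]; linarith)

lemma AbsoluteValue.apply_intCast_le {R : Type*} [Ring R] [Nontrivial R]
    (v : AbsoluteValue R ℝ) (n : ℤ) : v n ≤ |(n : ℝ)| := by
  rcases Int.natAbs_eq n with h | h <;> rw [h] <;> simpa using v.apply_natCast_le n.natAbs

lemma Height.mulHeight_intCast_le {K : Type*} [Field K] [AdmissibleAbsValues K] {ι : Type*}
    {n : ι → ℤ} {C : ℝ} (hC : 1 ≤ C) (hn : ∀ i, |(n i : ℝ)| ≤ C) :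
    mulHeight (fun i => (n i : K)) ≤ C ^ totalWeight K := by
  by_cases hx : (fun i => (n i : K)) = 0
  · rw [hx, mulHeight_zero]
    exact one_le_pow₀ hC
  have : Nonempty ι := by
    obtain ⟨i, -⟩ := Function.ne_iff.mp hx
    exact ⟨i⟩
  have hsup (v : AbsoluteValue K ℝ) : 0 ≤ ⨆ i, v (n i) := Real.iSup_nonneg_of_nonnegHomClass v _
  rw [mulHeight_eq hx, ← mul_one (C ^ totalWeight K)]
  gcongr
  · exact finprod_nonneg fun v => hsup v.val
  · refine (Multiset.prod_map_le_prod_map₀ _ (fun _ => C) (fun v _ => hsup v)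
      (fun v _ => ciSup_le fun i => (v.apply_intCast_le _).trans (hn i))).trans_eq ?_
    simp [totalWeight]
  · refine (finprod_induction (fun x : ℝ => 0 ≤ x ∧ x ≤ 1) ⟨zero_le_one, le_rfl⟩
      (fun x y hx hy => ⟨mul_nonneg hx.1 hy.1, mul_le_one₀ hx.2 hy.1 hy.2⟩)
      (fun v : nonarchAbsVal => ⟨hsup v.val, ciSup_le fun i => ?_⟩)).2
    exact (isNonarchimedean v.val v.prop).apply_intCast_le_one

namespace MvPolynomial

section Majorant

variable {R σ : Type*} [CommRing R] [LinearOrder R] [IsStrictOrderedRing R]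

def IsMajorizedBy (P Q : MvPolynomial σ R) : Prop :=
  ∀ ν, |coeff ν P| ≤ coeff ν Q

namespace IsMajorizedBy

variable {P P' Q Q' : MvPolynomial σ R}

lemma coeff_nonneg (h : IsMajorizedBy P Q) (ν : σ →₀ ℕ) : 0 ≤ coeff ν Q :=
  (abs_nonneg _).trans (h ν)

lemma add (hP : IsMajorizedBy P P') (hQ : IsMajorizedBy Q Q') :
    IsMajorizedBy (P + Q) (P' + Q') := fun ν => by
  simpa only [coeff_add] using (abs_add_le _ _).trans (add_le_add (hP ν) (hQ ν))

lemma mul (hP : IsMajorizedBy P P') (hQ : IsMajorizedBy Q Q') :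
    IsMajorizedBy (P * Q) (P' * Q') := fun ν => by
  classical
  rw [coeff_mul, coeff_mul]
  refine (Finset.abs_sum_le_sum_abs _ _).trans (Finset.sum_le_sum fun x _ => ?_)
  rw [abs_mul]
  exact mul_le_mul (hP _) (hQ _) (abs_nonneg _) (hP.coeff_nonneg _)

lemma abs_coeff_le_eval_one [Fintype σ] (h : IsMajorizedBy P Q) (ν : σ →₀ ℕ) :
    |coeff ν P| ≤ eval 1 Q := by
  classical
  refine (h ν).trans ?_
  rw [eval_eq]
  simp only [Pi.one_apply, one_pow, Finset.prod_const_one, mul_one]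
  by_cases hν : ν ∈ Q.support
  · exact Finset.single_le_sum (fun μ _ => h.coeff_nonneg μ) hν
  · rw [notMem_support_iff.mp hν]
    exact Finset.sum_nonneg fun μ _ => h.coeff_nonneg μ

end IsMajorizedBy

lemma isMajorizedBy_one : IsMajorizedBy (1 : MvPolynomial σ R) 1 := fun ν => by
  classical
  rw [coeff_one]
  split_ifs <;> simp

lemma isMajorizedBy_C_mul_X (a : R) (k : σ) : IsMajorizedBy (C a * X k) (C |a| * X k) :=
  fun ν => by
    classical
    rw [coeff_C_mul, coeff_C_mul, coeff_X, abs_mul]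
    split_ifs <;> simp

lemma isMajorizedBy_sum {ι : Type*} (s : Finset ι) {P Q : ι → MvPolynomial σ R}
    (h : ∀ i ∈ s, IsMajorizedBy (P i) (Q i)) :
    IsMajorizedBy (∑ i ∈ s, P i) (∑ i ∈ s, Q i) := by
  classical
  induction s using Finset.induction_on with
  | empty => simp [IsMajorizedBy]
  | insert a s ha ih =>
    rw [Finset.sum_insert ha, Finset.sum_insert ha]
    exact (h a (s.mem_insert_self a)).add (ih fun i hi => h i (Finset.mem_insert_of_mem hi))

lemma isMajorizedBy_prod {ι : Type*} (s : Finset ι) {P Q : ι → MvPolynomial σ R}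
    (h : ∀ i ∈ s, IsMajorizedBy (P i) (Q i)) :
    IsMajorizedBy (∏ i ∈ s, P i) (∏ i ∈ s, Q i) := by
  classical
  induction s using Finset.induction_on with
  | empty => simpa using isMajorizedBy_one
  | insert a s ha ih =>
    rw [Finset.prod_insert ha, Finset.prod_insert ha]
    exact (h a (s.mem_insert_self a)).mul (ih fun i hi => h i (Finset.mem_insert_of_mem hi))

lemma IsMajorizedBy.pow {P Q : MvPolynomial σ R} (h : IsMajorizedBy P Q) (n : ℕ) :
    IsMajorizedBy (P ^ n) (Q ^ n) := by
  simpa using isMajorizedBy_prod (Finset.range n) fun _ _ => h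

lemma abs_coeff_prod_pow_linearForm_le [Fintype σ] {ι : Type*} [Fintype ι] (a : ι → σ → R)
    {b : R} (ha : ∀ i, ∑ k, |a i k| ≤ b) (d : ι → ℕ) (ν : σ →₀ ℕ) :
    |coeff ν (∏ i, (∑ k, C (a i k) * X k) ^ d i)| ≤ b ^ ∑ i, d i := by
  have hmaj := isMajorizedBy_prod Finset.univ fun i _ =>
    (isMajorizedBy_sum Finset.univ fun k _ => isMajorizedBy_C_mul_X (a i k) k).pow (d i)
  refine (hmaj.abs_coeff_le_eval_one ν).trans ?_
  simp only [map_prod, map_pow, map_sum, map_mul, eval_C, eval_X, Pi.one_apply, mul_one]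
  rw [← Finset.prod_pow_eq_pow_sum]
  exact Finset.prod_le_prod (fun i _ => pow_nonneg (Finset.sum_nonneg fun k _ => abs_nonneg _) _)
    fun i _ => pow_le_pow_left₀ (Finset.sum_nonneg fun k _ => abs_nonneg _) (ha i) _

end Majorant

lemma IsHomogeneous.sum_eq_of_mem_support {R σ : Type*} [CommSemiring R] [Fintype σ]
    {U : MvPolynomial σ R} {D : ℕ} (hU : U.IsHomogeneous D) {d : σ →₀ ℕ} (hd : d ∈ U.support) :
    ∑ i, d i = D := by
  rw [← Finsupp.degree_eq_sum, Finsupp.degree_eq_weight_one]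
  exact hU (mem_support_iff.mp hd)

lemma card_support_le_choose {R σ : Type*} [CommSemiring R] [Fintype σ] {U : MvPolynomial σ R}
    {D : ℕ} (hU : U.IsHomogeneous D) : U.support.card ≤ (Fintype.card σ + D - 1).choose D := by
  classical
  calc U.support.card ≤ (Finset.univ.finsuppAntidiag D).card := by
        exact Finset.card_le_card fun d hd => Finset.mem_finsuppAntidiag.mpr
          ⟨hU.sum_eq_of_mem_support hd, Finset.subset_univ _⟩
    _ = (Fintype.card σ + D - 1).choose D := by
        rw [Finset.card_finsuppAntidiag_nat_eq_choose, Finset.card_univ]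

lemma coeff_aeval_map {R K σ τ : Type*} [CommSemiring R] [CommSemiring K] [Fintype σ] (f : R →+* K)
    (P : σ → MvPolynomial τ R) (U : MvPolynomial σ K) (ν : τ →₀ ℕ) :
    coeff ν (aeval (fun j => map f (P j)) U)
      = ∑ d ∈ U.support, f (coeff ν (∏ j, P j ^ d j)) * coeff d U := by
  rw [aeval_def, eval₂_eq', coeff_sum]
  refine Finset.sum_congr rfl fun d _ => ?_
  simp only [← map_pow, ← map_prod, algebraMap_eq, coeff_C_mul, coeff_map, mul_comm]

end MvPolynomial

lemma vadicAbs_eq_finitePlace_mk {K : Type*} [Field K] [NumberField K]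
    (v : HeightOneSpectrum (𝓞 K)) (x : K) : vadicAbs v x = FinitePlace.mk v x := by
  rw [FinitePlace.mk_apply, FinitePlace.norm_embedding]
  rfl

lemma polyHeight_eq_logHeight {K : Type*} [Field K] [NumberField K] {σ : Type*}
    (P : MvPolynomial σ K) (hP : P ≠ 0) :
    polyHeight P hP = logHeight (fun μ : P.support => P.coeff μ) / Module.finrank ℚ K := by
  have hs : P.support.Nonempty := support_nonempty.mpr hP
  have hx : (fun μ : P.support => P.coeff μ) ≠ 0 := fun h =>
    mem_support_iff.mp hs.choose_spec (congr_fun h ⟨_, hs.choose_spec⟩)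
  have hpos (v : AbsoluteValue K ℝ) : 0 < ⨆ μ : P.support, v (P.coeff μ) :=
    (v.pos (mem_support_iff.mp hs.choose_spec)).trans_le
      (Finite.le_ciSup_of_le ⟨_, hs.choose_spec⟩ le_rfl)
  rw [logHeight_eq_log_mulHeight, NumberField.mulHeight_eq hx, Real.log_mul, Real.log_prod,
    Real.log_finprod, polyHeight]
  · simp only [Finset.sup'_eq_ciSup_coe, Real.log_pow, vadicAbs_eq_finitePlace_mk]
    congr 2
    rw [← finsum_comp_equiv FinitePlace.equivHeightOneSpectrum]
    simp only [FinitePlace.equivHeightOneSpectrum_apply, FinitePlace.mk_maximalIdeal]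
  · exact fun w => hpos w.1
  · exact fun w _ => (pow_pos (hpos w.1) _).ne'
  · exact Finset.prod_ne_zero_iff.mpr fun w _ => (pow_pos (hpos w.1) _).ne'
  · exact finprod_ne_zero fun w : FinitePlace K => (hpos w.1).ne'

theorem polyHeight_le_of_coeff_eq_sum_intCast_mul {K : Type*} [Field K] [NumberField K]
    {σ τ : Type*} (P : MvPolynomial σ K) (hP : P ≠ 0) (P' : MvPolynomial τ K) (hP' : P' ≠ 0)
    (n : (τ →₀ ℕ) → (σ →₀ ℕ) → ℤ) {c : ℝ} (hc : 1 ≤ c)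
    (hn : ∀ ν, ∀ d ∈ P.support, |(n ν d : ℝ)| ≤ c)
    (hcoeff : ∀ ν, coeff ν P' = ∑ d ∈ P.support, (n ν d : K) * coeff d P) :
    polyHeight P' hP' ≤ polyHeight P hP + Real.log c + Real.log P.support.card := by
  set A : P'.support × P.support → ℤ := fun p => n p.1 p.2
  have hlin : (fun ν : P'.support => coeff ν P')
      = fun ν => ∑ d : P.support, (A (ν, d) : K) * coeff d P := by
    funext ν
    rw [hcoeff, ← Finset.sum_coe_sort]
  have hA : logHeight (fun p => (A p : K)) ≤ totalWeight K * Real.log c := by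
    rw [logHeight_eq_log_mulHeight, ← Real.log_pow]
    exact Real.log_le_log (mulHeight_pos _) (mulHeight_intCast_le hc fun p => hn _ _ p.2.2)
  have hmap := logHeight_linearMap_apply_le (fun p => (A p : K)) (fun d : P.support => coeff d P)
  rw [← hlin, Nat.card_eq_fintype_card, Fintype.card_coe] at hmap
  have htw : (0 : ℝ) < totalWeight K := mod_cast totalWeight_pos K
  rw [polyHeight_eq_logHeight, polyHeight_eq_logHeight, ← totalWeight_eq_finrank, div_le_iff₀ htw,
    add_mul, add_mul, div_mul_cancel₀ _ htw.ne']
  linarith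

theorem stmt_17_general {K : Type*} [Field K] [NumberField K] (u N D B : ℕ)
    (hB : 1 ≤ B) (U : MvPolynomial (Fin (u + 1)) K) (hU : U ≠ 0)
    (hhom : U.IsHomogeneous D)
    (M : Fin (u + 1) → Fin (N + 1) → ℤ) (hM : ∀ j k, |M j k| ≤ (B : ℤ))
    (U' : MvPolynomial (Fin (N + 1)) K)
    (hU'def : U' = MvPolynomial.aeval
      (fun j : Fin (u + 1) => ∑ k : Fin (N + 1), (M j k : K) • MvPolynomial.X k) U)
    (hU' : U' ≠ 0) :
    polyHeight U' hU' ≤ polyHeight U hU + (D : ℝ) * Real.log (((N : ℝ) + 1) * (B : ℝ))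
      + Real.log (Nat.choose (D + u) D) := by
  set L : Fin (u + 1) → MvPolynomial (Fin (N + 1)) ℤ := fun j => ∑ k, C (M j k) * X k
  have hsubst : U' = aeval (fun j => map (Int.castRingHom K) (L j)) U := by
    simp [hU'def, L, map_sum, smul_eq_C_mul]
  have hbound : ∀ ν, ∀ d ∈ U.support,
      |((coeff ν (∏ j, L j ^ d j) : ℤ) : ℝ)| ≤ (((N : ℝ) + 1) * B) ^ D := by
    intro ν d hd
    have hrow (j : Fin (u + 1)) : ∑ k, |M j k| ≤ ((N : ℤ) + 1) * B := by
      simpa using Finset.sum_le_sum fun k (_ : k ∈ Finset.univ) => hM j k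
    have := abs_coeff_prod_pow_linearForm_le M hrow d ν
    rw [hhom.sum_eq_of_mem_support hd] at this
    exact_mod_cast this
  have hNB : 1 ≤ ((N : ℝ) + 1) * B := by
    have : (1 : ℝ) ≤ B := mod_cast hB
    nlinarith
  have hcard : U.support.card ≤ (D + u).choose D := by
    simpa [add_comm D u] using card_support_le_choose hhom
  calc polyHeight U' hU'
      ≤ polyHeight U hU + Real.log ((((N : ℝ) + 1) * B) ^ D) + Real.log U.support.card :=
        polyHeight_le_of_coeff_eq_sum_intCast_mul U hU U' hU' _
          (one_le_pow₀ hNB) hbound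
          (fun ν => by rw [hsubst, coeff_aeval_map]; rfl)
    _ ≤ _ := by
        rw [Real.log_pow]
        gcongr
        exact_mod_cast Finset.card_pos.mpr (support_nonempty.mpr hU)

/-- Let `K` be a number field, let `u ≥ 0`, `N ≥ 0`, `D ≥ 1` and `B ≥ 1` be integers, let
`U ∈ K[T₀, ..., T_u]` be a nonzero homogeneous polynomial of degree `D`, and let `(M_{jk})`
(`0 ≤ j ≤ u`, `0 ≤ k ≤ N`) be integers with `|M_{jk}| ≤ B`. Let `U' ∈ K[W₀, ..., W_N]` be
obtained from `U` by substituting `T_j = ∑_k M_{jk}·W_k`. If `U' ≠ 0`, then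
`h(U') ≤ h(U) + D·log((N+1)·B) + log C(D+u, D)`, where `h` of a nonzero polynomial is the
absolute logarithmic Weil height of its tuple of coefficients viewed as a point in
projective space. -/
theorem stmt_17 {K : Type*} [Field K] [NumberField K] (u N D B : ℕ) (hD : 1 ≤ D)
    (hB : 1 ≤ B) (U : MvPolynomial (Fin (u + 1)) K) (hU : U ≠ 0)
    (hhom : U.IsHomogeneous D)
    (M : Fin (u + 1) → Fin (N + 1) → ℤ) (hM : ∀ j k, |M j k| ≤ (B : ℤ))
    (U' : MvPolynomial (Fin (N + 1)) K)
    (hU'def : U' = MvPolynomial.aeval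
      (fun j : Fin (u + 1) => ∑ k : Fin (N + 1), (M j k : K) • MvPolynomial.X k) U)
    (hU' : U' ≠ 0) :
    polyHeight U' hU' ≤ polyHeight U hU + (D : ℝ) * Real.log (((N : ℝ) + 1) * (B : ℝ))
      + Real.log (Nat.choose (D + u) D) :=
  stmt_17_general u N D B hB U hU hhom M hM U' hU'def hU'
end
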